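/- For every x = (x₁,x₂,x₃,x₄) ∈ ℂ⁴, the 5×5 matrix A(x) is Hermitian and positive definite; in particular A(x) is invertible. -/

import Mathlib

/- STATEMENT 8: For every x ∈ ℂ⁴, the 5×5 matrix A(x) is Hermitian and positive
definite; in particular A(x) is invertible. Here x 0,…,x 3 stand for x₁,…,x₄. -/

open scoped ComplexOrder

noncomputable section

/-- n = 1 + Σ |x_i|², as a complex number. -/
def nC (x : Fin 4 → ℂ) : ℂ := 1 + ∑ i, star (x i) * x i

/-- The 5×5 matrix A(x). -/
def Amat (x : Fin 4 → ℂ) : Matrix (Fin 5) (Fin 5) ℂ :=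
  !![nC x + 1, star (x 1) * x 3, star (x 3) * x 2, star (x 0) * x 1, star (x 2) * x 0;
     star (x 3) * x 1, nC x + star (x 0) * x 0, star (x 2), x 3, star (x 1) * x 2;
     star (x 2) * x 3, x 2, nC x + star (x 1) * x 1, star (x 3) * x 0, star (x 0);
     star (x 1) * x 0, star (x 3), star (x 0) * x 3, nC x + star (x 2) * x 2, x 1;
     star (x 0) * x 2, star (x 2) * x 1, x 0, star (x 1), nC x + star (x 3) * x 3]

/-!
A(x) is the Gram matrix of five explicit vectors of ℂ²⁰, so it is Hermitian and positive
semidefinite, and it is positive definite as soon as these vectors are linearly independent.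
Independence is read off six coordinates of a vanishing combination `∑ cᵢ vᵢ`: they give
`c₀ = 0` and `x̄₀ c₃ = 0`, and a chain expressing `c₁` as a multiple of `x̄₀ c₃`, after which
`c₃`, `c₄`, `c₂` vanish in turn.
-/

open Matrix ComplexConjugate

section

variable (x : Fin 4 → ℂ)

/-- The entries are conjugated because `inner` is conjugate-linear in its first argument. -/
def monadImageVectors : Fin 5 → EuclideanSpace ℂ (Fin 20) :=
  let s i := star (x i)
  ![!₂[0, 0, 1, 0, 0, 0, 0, -s 1, -s 2, 0, 0, 0, 0, 1, 0, 0, s 0, 0, 0, s 3],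
    !₂[s 0, 0, 0, -s 2, -s 3, 0, 0, 0, 0, 0, 0, 0, 0, 0, 0, 1, 0, 0, s 0, s 1],
    !₂[0, -1, 0, 0, 0, 0, s 1, 0, -s 3, 0, 0, 0, s 0, 0, s 1, s 2, 0, 0, 0, 0],
    !₂[0, 0, 0, 0, -1, 0, 0, -s 0, 0, s 2, s 1, s 2, s 3, 0, 0, 0, 0, 0, 0, 0],
    !₂[0, -s 0, 0, -s 1, 0, s 3, 0, 0, 0, 0, 1, 0, 0, 0, 0, 0, s 2, s 3, 0, 0]]

theorem Amat_eq_gram : Amat x = gram ℂ (monadImageVectors x) := by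
  ext i j
  simp only [gram_apply, PiLp.inner_apply]
  fin_cases i <;> fin_cases j <;>
    simp [Amat, nC, monadImageVectors, Fin.sum_univ_succ, Complex.conj_mul'] <;> ring

theorem linearIndependent_monadImageVectors : LinearIndependent ℂ (monadImageVectors x) := by
  rw [Fintype.linearIndependent_iff]
  intro c hc
  have coord (k : Fin 20) : ∑ i, c i * monadImageVectors x i k = 0 := by
    simpa using congrArg (· k) hc
  have h1 := coord 1
  have h2 := coord 2
  have h4 := coord 4
  have h7 := coord 7
  have h10 := coord 10
  have h15 := coord 15
  simp [monadImageVectors, Fin.sum_univ_five] at h1 h2 h4 h7 h10 h15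
  have hc1 : c 1 = 0 := by
    linear_combination h15 + conj (x 2) * h1 + conj (x 2) * conj (x 0) * h10 +
      conj (x 2) * conj (x 1) * h7 + conj (x 2) * conj (x 1) ^ 2 * h2
  have hc3 : c 3 = 0 := by linear_combination -h4 - conj (x 3) * hc1
  have hc4 : c 4 = 0 := by linear_combination h10 - conj (x 1) * hc3
  have hc2 : c 2 = 0 := by linear_combination -h1 - conj (x 0) * hc4
  intro i
  fin_cases i
  exacts [h2, hc1, hc2, hc3, hc4]

end

theorem horrocks_mumford_stmt8 (x : Fin 4 → ℂ) :
    (Amat x).IsHermitian ∧ (Amat x).PosDef ∧ IsUnit (Amat x) := by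
  have hA : (Amat x).PosDef := by
    rw [Amat_eq_gram]
    exact posDef_gram_of_linearIndependent (linearIndependent_monadImageVectors x)
  exact ⟨hA.isHermitian, hA, hA.isUnit⟩
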